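/- arXiv:2406.15099 — 6 statements merged into one kernel-verified Lean document; each statement's English description precedes it below -/
import Mathlib

section
/- Given functions β₁, β₂, β₃ of class K∞ (continuous, strictly increasing, unbounded, zero at zero, mapping [0,∞) to [0,∞)) and a constant μ ≥ 0, there exists a function η of class K∞ such that η(β₁(s))·β₂(s) ≤ β₃(s) for all s in [0, μ]. -/
/-- A function `f : ℝ → ℝ` is of class K∞ on `[0,∞)`: continuous, strictly increasing,
zero at zero, nonnegative, and unbounded. -/
def IsKInf (f : ℝ → ℝ) : Prop :=
  ContinuousOn f (Set.Ici 0) ∧ StrictMonoOn f (Set.Ici 0) ∧ f 0 = 0 ∧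
  (∀ s ∈ Set.Ici (0:ℝ), 0 ≤ f s) ∧ (∀ M : ℝ, ∃ s ∈ Set.Ici (0:ℝ), M ≤ f s)

/-! The candidate is `η = β₃ ∘ β₁⁻¹ / β₂ c` with `c = max μ 1`: then
`η (β₁ s) * β₂ s = β₃ s * (β₂ s / β₂ c) ≤ β₃ s` for `0 ≤ s ≤ μ`, because `β₂` is increasing and
`β₂ c > 0`. The inverse `β₁⁻¹` is again of class K∞: extending `β₁` by the identity on the
negative reals gives an order automorphism of `ℝ`, whose inverse is continuous. -/

theorem isKInf_of_orderIso (e : ℝ ≃o ℝ) (he : e 0 = 0) : IsKInf e := by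
  refine ⟨e.continuous.continuousOn, e.strictMono.strictMonoOn _, he,
    fun s hs => he ▸ e.monotone hs, fun M => ?_⟩
  have he' : e.symm 0 = 0 := by rw [e.symm_apply_eq, he]
  exact ⟨e.symm (max M 0), he'.symm.trans_le (e.symm.monotone (le_max_right M 0)), by simp⟩

namespace IsKInf

variable {f g : ℝ → ℝ}

theorem comp (hf : IsKInf f) (hg : IsKInf g) : IsKInf (f ∘ g) := by
  obtain ⟨hfc, hfm, hf0, hfn, hfu⟩ := hf
  obtain ⟨hgc, hgm, hg0, hgn, hgu⟩ := hg
  refine ⟨hfc.comp hgc hgn, hfm.comp hgm hgn, by simp [hg0, hf0],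
    fun s hs => hfn _ (hgn s hs), fun M => ?_⟩
  obtain ⟨t, ht, hMt⟩ := hfu M
  obtain ⟨s, hs, hts⟩ := hgu t
  exact ⟨s, hs, hMt.trans (hfm.monotoneOn ht (hgn s hs) hts)⟩

theorem div_const (hf : IsKInf f) {c : ℝ} (hc : 0 < c) : IsKInf fun x => f x / c := by
  obtain ⟨hfc, hfm, hf0, hfn, hfu⟩ := hf
  refine ⟨hfc.div_const c, fun a ha b hb hab => div_lt_div_of_pos_right (hfm ha hb hab) hc,
    by simp [hf0], fun s hs => div_nonneg (hfn s hs) hc.le, fun M => ?_⟩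
  obtain ⟨s, hs, hMs⟩ := hfu (M * c)
  exact ⟨s, hs, (le_div_iff₀ hc).2 hMs⟩

theorem pos (hf : IsKInf f) {s : ℝ} (hs : 0 < s) : 0 < f s := by
  simpa [hf.2.2.1] using hf.2.1 Set.self_mem_Ici hs.le hs

noncomputable def extend (f : ℝ → ℝ) (x : ℝ) : ℝ := if 0 ≤ x then f x else x

theorem strictMono_extend (hf : IsKInf f) : StrictMono (extend f) := by
  intro x y hxy
  by_cases hx : 0 ≤ x
  · simpa [extend, hx, hx.trans hxy.le] using hf.2.1 hx (hx.trans hxy.le) hxy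
  · by_cases hy : 0 ≤ y
    · simpa [extend, hx, hy] using (not_le.1 hx).trans_le (hf.2.2.2.1 y hy)
    · simpa [extend, hx, hy] using hxy

theorem surjective_extend (hf : IsKInf f) : Function.Surjective (extend f) := by
  intro y
  by_cases hy : 0 ≤ y
  · obtain ⟨s, hs, hys⟩ := hf.2.2.2.2 y
    obtain ⟨x, hx, rfl⟩ := intermediate_value_Icc (Set.mem_Ici.1 hs)
      (hf.1.mono fun x hx => hx.1)
      (show y ∈ Set.Icc (f 0) (f s) by rw [hf.2.2.1]; exact ⟨hy, hys⟩)
    exact ⟨x, by simp [extend, hx.1]⟩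
  · exact ⟨y, by simp [extend, hy]⟩

theorem exists_leftInverse (hf : IsKInf f) :
    ∃ g : ℝ → ℝ, IsKInf g ∧ ∀ s, 0 ≤ s → g (f s) = s := by
  let e := hf.strictMono_extend.orderIsoOfSurjective _ hf.surjective_extend
  have he : ∀ s, 0 ≤ s → e s = f s := fun s hs => by simp [e, extend, hs]
  refine ⟨e.symm, isKInf_of_orderIso _ ?_, fun s hs => by rw [← he s hs, e.symm_apply_apply]⟩
  rw [e.symm_apply_eq, he 0 le_rfl, hf.2.2.1]

end IsKInf

theorem stmt_0_general (β₁ β₂ β₃ : ℝ → ℝ) (h1 : IsKInf β₁) (h2 : IsKInf β₂) (h3 : IsKInf β₃)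
    (μ : ℝ) :
    ∃ η : ℝ → ℝ, IsKInf η ∧ ∀ s ∈ Set.Icc (0:ℝ) μ, η (β₁ s) * β₂ s ≤ β₃ s := by
  obtain ⟨β₁inv, hinv, hβ₁inv⟩ := h1.exists_leftInverse
  have hc : 0 < β₂ (max μ 1) := h2.pos (by positivity)
  refine ⟨fun t => β₃ (β₁inv t) / β₂ (max μ 1), (h3.comp hinv).div_const hc, fun s hs => ?_⟩
  have hβ₂s : β₂ s ≤ β₂ (max μ 1) :=
    h2.2.1.monotoneOn hs.1 (by positivity : (0 : ℝ) ≤ max μ 1) (hs.2.trans (le_max_left μ 1))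
  calc β₃ (β₁inv (β₁ s)) / β₂ (max μ 1) * β₂ s = β₃ s * (β₂ s / β₂ (max μ 1)) := by
        rw [hβ₁inv s hs.1]; ring
    _ ≤ β₃ s * 1 := by
        gcongr
        · exact h3.2.2.2.1 s hs.1
        · exact (div_le_one hc).2 hβ₂s
    _ = β₃ s := mul_one _

theorem stmt_0 (β₁ β₂ β₃ : ℝ → ℝ) (h1 : IsKInf β₁) (h2 : IsKInf β₂) (h3 : IsKInf β₃)
    (μ : ℝ) (hμ : 0 ≤ μ) :
    ∃ η : ℝ → ℝ, IsKInf η ∧ ∀ s ∈ Set.Icc (0:ℝ) μ, η (β₁ s) * β₂ s ≤ β₃ s :=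
  stmt_0_general β₁ β₂ β₃ h1 h2 h3 μ
end

section
/- Let α be a class K∞ function on [0,∞) and let F : ℝ^m ⇒ ℝ^m be a set-valued map such that ⟨w, y⟩ ≥ ‖y‖·α(‖y‖) for every y ∈ ℝ^m and every w ∈ F(y). Then for all u, y ∈ ℝ^m and all w ∈ F(y), 2⟨u, y⟩ ≤ ⟨y, w⟩ + 2·α⁻¹(2‖u‖)·‖u‖. -/
open scoped RealInnerProductSpace

/-- If `t > α⁻¹ c`, monotonicity gives `c = α (α⁻¹ c) ≤ α t`; otherwise `c t ≤ c α⁻¹(c)`. -/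
theorem mul_le_mul_apply_add_mul_inv_apply {α αinv : ℝ → ℝ} (hα : MonotoneOn α (Set.Ici 0))
    {c t : ℝ} (hc : 0 ≤ c) (ht : 0 ≤ t) (hαt : 0 ≤ α t) (hinv : α (αinv c) = c)
    (hinv_nonneg : 0 ≤ αinv c) :
    c * t ≤ t * α t + c * αinv c := by
  rcases le_total t (αinv c) with hle | hle
  · nlinarith [mul_le_mul_of_nonneg_left hle hc, mul_nonneg ht hαt]
  · have hcα : c ≤ α t := hinv ▸ hα hinv_nonneg ht hle
    nlinarith [mul_le_mul_of_nonneg_left hcα ht, mul_nonneg hc hinv_nonneg]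

theorem stmt_1_general (m : ℕ) (α αinv : ℝ → ℝ) (hα : IsKInf α)
    (hinv₂ : ∀ s ∈ Set.Ici (0:ℝ), α (αinv s) = s)
    (hinv₃ : ∀ s ∈ Set.Ici (0:ℝ), 0 ≤ αinv s)
    (F : EuclideanSpace ℝ (Fin m) → Set (EuclideanSpace ℝ (Fin m)))
    (hF : ∀ y : EuclideanSpace ℝ (Fin m), ∀ w ∈ F y, ⟪w, y⟫ ≥ ‖y‖ * α ‖y‖) :
    ∀ (u y : EuclideanSpace ℝ (Fin m)), ∀ w ∈ F y,
      2 * ⟪u, y⟫ ≤ ⟪y, w⟫ + 2 * αinv (2 * ‖u‖) * ‖u‖ := by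
  intro u y w hw
  obtain ⟨-, hmono, -, hnonneg, -⟩ := hα
  have hu : (0 : ℝ) ≤ 2 * ‖u‖ := by positivity
  calc 2 * ⟪u, y⟫ ≤ 2 * ‖u‖ * ‖y‖ := by
        rw [mul_assoc]; exact mul_le_mul_of_nonneg_left (real_inner_le_norm u y) two_pos.le
    _ ≤ ‖y‖ * α ‖y‖ + 2 * ‖u‖ * αinv (2 * ‖u‖) :=
        mul_le_mul_apply_add_mul_inv_apply hmono.monotoneOn hu (norm_nonneg y)
          (hnonneg _ (norm_nonneg y)) (hinv₂ _ hu) (hinv₃ _ hu)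
    _ ≤ ⟪y, w⟫ + 2 * αinv (2 * ‖u‖) * ‖u‖ := by
        rw [real_inner_comm]; linarith [hF y w hw]

theorem stmt_1 (m : ℕ) (α αinv : ℝ → ℝ) (hα : IsKInf α)
    (hinv₁ : ∀ s ∈ Set.Ici (0:ℝ), αinv (α s) = s)
    (hinv₂ : ∀ s ∈ Set.Ici (0:ℝ), α (αinv s) = s)
    (hinv₃ : ∀ s ∈ Set.Ici (0:ℝ), 0 ≤ αinv s)
    (F : EuclideanSpace ℝ (Fin m) → Set (EuclideanSpace ℝ (Fin m)))
    (hF : ∀ y : EuclideanSpace ℝ (Fin m), ∀ w ∈ F y, ⟪w, y⟫ ≥ ‖y‖ * α ‖y‖) :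
    ∀ (u y : EuclideanSpace ℝ (Fin m)), ∀ w ∈ F y,
      2 * ⟪u, y⟫ ≤ ⟪y, w⟫ + 2 * αinv (2 * ‖u‖) * ‖u‖ :=
  stmt_1_general m α αinv hα hinv₂ hinv₃ F hF
end

section
/- Let θ be of class K∞, α : [0,∞) → [0,∞) continuous with α ≤ θ, and c, μ > 0 with c·μ ≥ 1, and let F(y) := { w ∈ ℝ^m : ‖w‖ ≤ θ(‖y‖), ⟨w,y⟩ ≥ ‖y‖·α(‖y‖), and (‖y‖ > μ → c·⟨w,y⟩ ≥ ‖w‖) }. Suppose (y_k) → y in ℝ^m and w_k ∈ F(y_k) for each k. Then (w_k) is bounded, and every cluster point w of (w_k) satisfies w ∈ F(y). Consequently F is upper hemicontinuous with compact values. -/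
/-! Everything follows from two properties of `F`: its graph is closed (as `θ` and `α` are
continuous), and near `y` its values lie in a common compact ball (as `‖w‖ ≤ θ ‖y‖`). Limits of
selections along convergent arguments then stay in the graph, and the tube lemma applied to
`{y} ×ˢ (K \ U)` gives a neighbourhood of `y` on which the values avoid the compact `K \ U`. -/

open scoped RealInnerProductSpace Topology
open Filter Metric Set

section ClosedGraph

variable {X Y ι : Type*} [TopologicalSpace X] [TopologicalSpace Y] {F : X → Set Y}

theorem mem_of_mapClusterPt_of_isClosed_graph (hF : IsClosed {p : X × Y | p.2 ∈ F p.1})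
    {l : Filter ι} {xs : ι → X} {ws : ι → Y} {x : X} {w : Y}
    (hxs : Tendsto xs l (𝓝 x)) (hws : ∀ k, ws k ∈ F (xs k)) (hw : MapClusterPt w l ws) :
    w ∈ F x := by
  obtain ⟨u, hul, hu⟩ := mapClusterPt_iff_ultrafilter.1 hw
  exact hF.mem_of_tendsto ((hxs.mono_left hul).prodMk_nhds hu) (Eventually.of_forall hws)

theorem isClosed_of_isClosed_graph (hF : IsClosed {p : X × Y | p.2 ∈ F p.1}) (x : X) :
    IsClosed (F x) :=
  hF.preimage (continuous_const.prodMk continuous_id)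

theorem eventually_subset_of_isClosed_graph (hF : IsClosed {p : X × Y | p.2 ∈ F p.1})
    {x : X} {K : Set Y} (hK : IsCompact K) (hxK : ∀ᶠ x' in 𝓝 x, F x' ⊆ K)
    {U : Set Y} (hU : IsOpen U) (hxU : F x ⊆ U) :
    ∀ᶠ x' in 𝓝 x, F x' ⊆ U := by
  have hdisj : {x} ×ˢ (K \ U) ⊆ {p : X × Y | p.2 ∈ F p.1}ᶜ := by
    rintro ⟨x', w⟩ ⟨rfl, -, hwU⟩ hw
    exact hwU (hxU hw)
  obtain ⟨u, v, hu, -, hxu, hKv, huv⟩ :=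
    generalized_tube_lemma isCompact_singleton (hK.diff hU) hF.isOpen_compl hdisj
  filter_upwards [hu.mem_nhds (singleton_subset_iff.1 hxu), hxK] with x' hx'u hx'K w hw
  by_contra hwU
  exact huv (a := (x', w)) ⟨hx'u, hKv ⟨hx'K hw, hwU⟩⟩ hw

end ClosedGraph

section SectorMap

variable {E : Type*} [NormedAddCommGroup E] [InnerProductSpace ℝ E]

def sectorMap (θ α : ℝ → ℝ) (c μ : ℝ) (y : E) : Set E :=
  {w | ‖w‖ ≤ θ ‖y‖ ∧ ⟪w, y⟫ ≥ ‖y‖ * α ‖y‖ ∧ (‖y‖ > μ → c * ⟪w, y⟫ ≥ ‖w‖)}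

theorem sectorMap_subset_closedBall (θ α : ℝ → ℝ) (c μ : ℝ) (y : E) :
    sectorMap θ α c μ y ⊆ closedBall 0 (θ ‖y‖) :=
  fun _ hw ↦ mem_closedBall_zero_iff.2 hw.1

theorem isClosed_graph_sectorMap {θ α : ℝ → ℝ} (hθ : ContinuousOn θ (Ici 0))
    (hα : ContinuousOn α (Ici 0)) (c μ : ℝ) :
    IsClosed {p : E × E | p.2 ∈ sectorMap θ α c μ p.1} := by
  have hnorm : Continuous fun p : E × E ↦ ‖p.1‖ := continuous_fst.norm
  have hθn := hθ.comp_continuous hnorm fun p ↦ norm_nonneg p.1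
  have hαn := hα.comp_continuous hnorm fun p ↦ norm_nonneg p.1
  have hinner : Continuous fun p : E × E ↦ ⟪p.2, p.1⟫ := continuous_snd.inner continuous_fst
  simp_rw [sectorMap, mem_ofPred_eq, imp_iff_not_or, not_lt, ofPred_and, ofPred_or]
  exact (isClosed_le continuous_snd.norm hθn).inter
    ((isClosed_le (hnorm.mul hαn) hinner).inter
      ((isClosed_le hnorm continuous_const).union
        (isClosed_le continuous_snd.norm (continuous_const.mul hinner))))

end SectorMap

theorem stmt_5_general (m : ℕ) (θ α : ℝ → ℝ) (hθ : IsKInf θ)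
    (hαc : ContinuousOn α (Set.Ici 0))
    (c μ : ℝ)
    (F : EuclideanSpace ℝ (Fin m) → Set (EuclideanSpace ℝ (Fin m)))
    (hF : ∀ y, F y = {w : EuclideanSpace ℝ (Fin m) |
      ‖w‖ ≤ θ ‖y‖ ∧ ⟪w, y⟫ ≥ ‖y‖ * α ‖y‖ ∧ (‖y‖ > μ → c * ⟪w, y⟫ ≥ ‖w‖)}) :
    (∀ (y : EuclideanSpace ℝ (Fin m)) (ys ws : ℕ → EuclideanSpace ℝ (Fin m)),
      Filter.Tendsto ys Filter.atTop (nhds y) → (∀ k, ws k ∈ F (ys k)) →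
        (∃ R : ℝ, ∀ k, ‖ws k‖ ≤ R) ∧
        (∀ w : EuclideanSpace ℝ (Fin m), MapClusterPt w Filter.atTop ws → w ∈ F y)) ∧
    (∀ y, IsCompact (F y)) ∧
    (∀ (y : EuclideanSpace ℝ (Fin m)) (U : Set (EuclideanSpace ℝ (Fin m))),
      IsOpen U → F y ⊆ U → ∀ᶠ y' in nhds y, F y' ⊆ U) := by
  obtain rfl : F = sectorMap θ α c μ := funext hF
  have hG := isClosed_graph_sectorMap (E := EuclideanSpace ℝ (Fin m)) hθ.1 hαc c μ
  have hθn : Continuous fun y : EuclideanSpace ℝ (Fin m) ↦ θ ‖y‖ :=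
    hθ.1.comp_continuous continuous_norm fun y ↦ norm_nonneg y
  refine ⟨fun y ys ws hys hws ↦ ⟨?_, fun w ↦ mem_of_mapClusterPt_of_isClosed_graph hG hys hws⟩,
    fun y ↦ ?_, fun y U hU hyU ↦ ?_⟩
  · obtain ⟨R, hR⟩ := ((hθn.tendsto y).comp hys).bddAbove_range
    exact ⟨R, fun k ↦ (hws k).1.trans (hR ⟨k, rfl⟩)⟩
  · exact (isCompact_closedBall 0 _).of_isClosed_subset (isClosed_of_isClosed_graph hG y)
      (sectorMap_subset_closedBall θ α c μ y)
  · refine eventually_subset_of_isClosed_graph hG (isCompact_closedBall 0 (θ ‖y‖ + 1)) ?_ hU hyU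
    filter_upwards [(hθn.tendsto y).eventually (gt_mem_nhds (lt_add_one _))] with y' hy'
    exact (sectorMap_subset_closedBall θ α c μ y').trans (closedBall_subset_closedBall hy'.le)

theorem stmt_5 (m : ℕ) (θ α : ℝ → ℝ) (hθ : IsKInf θ)
    (hαc : ContinuousOn α (Set.Ici 0))
    (hα : ∀ s ∈ Set.Ici (0:ℝ), 0 ≤ α s) (hαθ : ∀ s ∈ Set.Ici (0:ℝ), α s ≤ θ s)
    (c μ : ℝ) (hc : 0 < c) (hμ : 0 < μ) (hcμ : 1 ≤ c * μ)
    (F : EuclideanSpace ℝ (Fin m) → Set (EuclideanSpace ℝ (Fin m)))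
    (hF : ∀ y, F y = {w : EuclideanSpace ℝ (Fin m) |
      ‖w‖ ≤ θ ‖y‖ ∧ ⟪w, y⟫ ≥ ‖y‖ * α ‖y‖ ∧ (‖y‖ > μ → c * ⟪w, y⟫ ≥ ‖w‖)}) :
    (∀ (y : EuclideanSpace ℝ (Fin m)) (ys ws : ℕ → EuclideanSpace ℝ (Fin m)),
      Filter.Tendsto ys Filter.atTop (nhds y) → (∀ k, ws k ∈ F (ys k)) →
        (∃ R : ℝ, ∀ k, ‖ws k‖ ≤ R) ∧
        (∀ w : EuclideanSpace ℝ (Fin m), MapClusterPt w Filter.atTop ws → w ∈ F y)) ∧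
    (∀ y, IsCompact (F y)) ∧
    (∀ (y : EuclideanSpace ℝ (Fin m)) (U : Set (EuclideanSpace ℝ (Fin m))),
      IsOpen U → F y ⊆ U → ∀ᶠ y' in nhds y, F y' ⊆ U) :=
  stmt_5_general m θ α hθ hαc c μ F hF
end

section
/- Define g_d : ℝ → ℝ by g_d(z) = z·|z|^d for a natural number d ≥ 1. Then there is a constant c_d > 0 such that (z₁ − z₂)·(g_d(z₁) − g_d(z₂)) ≥ c_d·|z₁ − z₂|^{d+2} for all z₁, z₂ ∈ ℝ. -/
/-!
Write `g z = z * |z| ^ d`, an odd function equal to `z ^ (d + 1)` on `[0, ∞)`. For `z₂ ≤ z₁` we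
show `(z₁ - z₂) ^ (d + 1) ≤ 2 ^ d * (g z₁ - g z₂)`; multiplying by `z₁ - z₂ ≥ 0` gives the claim
with `c = 2⁻ᵈ`. If `0 ≤ z₂` this is superadditivity of `t ↦ t ^ (d + 1)` on `[0, ∞)`, and the case
`z₁ ≤ 0` reduces to it by oddness. If `z₂ ≤ 0 ≤ z₁`, then `g z₁ - g z₂ = z₁ ^ (d + 1) + |z₂| ^ (d + 1)`
and convexity gives `(z₁ + |z₂|) ^ (d + 1) ≤ 2 ^ d * (z₁ ^ (d + 1) + |z₂| ^ (d + 1))`.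
-/

section

variable {R : Type*} [CommRing R] [LinearOrder R]

def signedPow (d : ℕ) (z : R) : R := z * |z| ^ d

variable {d : ℕ} {z z₁ z₂ : R}

theorem signedPow_neg (z : R) : signedPow d (-z) = -signedPow d z := by
  rw [signedPow, signedPow, abs_neg]
  ring

variable [IsStrictOrderedRing R]

theorem sub_pow_le_pow_sub_pow {a b : R} {n : ℕ} (hb : 0 ≤ b) (hba : b ≤ a) (hn : n ≠ 0) :
    (a - b) ^ n ≤ a ^ n - b ^ n := by
  have h := pow_add_pow_le (sub_nonneg.2 hba) hb hn
  rwa [sub_add_cancel, ← le_sub_iff_add_le] at h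

theorem signedPow_of_nonneg (hz : 0 ≤ z) : signedPow d z = z ^ (d + 1) := by
  rw [signedPow, abs_of_nonneg hz, pow_succ']

theorem signedPow_of_nonpos (hz : z ≤ 0) : signedPow d z = -(-z) ^ (d + 1) := by
  rw [signedPow, abs_of_nonpos hz, pow_succ']
  ring

theorem pow_sub_le_two_pow_mul_signedPow_sub_of_nonneg (h₂ : 0 ≤ z₂) (h : z₂ ≤ z₁) :
    (z₁ - z₂) ^ (d + 1) ≤ 2 ^ d * (signedPow d z₁ - signedPow d z₂) := by
  have hsuper : (z₁ - z₂) ^ (d + 1) ≤ signedPow d z₁ - signedPow d z₂ := by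
    rw [signedPow_of_nonneg (h₂.trans h), signedPow_of_nonneg h₂]
    exact sub_pow_le_pow_sub_pow h₂ h d.succ_ne_zero
  have hgap : 0 ≤ signedPow d z₁ - signedPow d z₂ :=
    (pow_nonneg (sub_nonneg.2 h) _).trans hsuper
  exact hsuper.trans (le_mul_of_one_le_left hgap (one_le_pow₀ one_le_two))

theorem pow_sub_le_two_pow_mul_signedPow_sub_of_nonpos_of_nonneg (h₂ : z₂ ≤ 0) (h₁ : 0 ≤ z₁) :
    (z₁ - z₂) ^ (d + 1) ≤ 2 ^ d * (signedPow d z₁ - signedPow d z₂) := by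
  have hconv := add_pow_le h₁ (neg_nonneg.2 h₂) (d + 1)
  rw [signedPow_of_nonneg h₁, signedPow_of_nonpos h₂, sub_neg_eq_add]
  rwa [Nat.add_sub_cancel, ← sub_eq_add_neg] at hconv

theorem pow_sub_le_two_pow_mul_signedPow_sub (h : z₂ ≤ z₁) :
    (z₁ - z₂) ^ (d + 1) ≤ 2 ^ d * (signedPow d z₁ - signedPow d z₂) := by
  rcases le_total 0 z₂ with h₂ | h₂
  · exact pow_sub_le_two_pow_mul_signedPow_sub_of_nonneg h₂ h
  rcases le_total 0 z₁ with h₁ | h₁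
  · exact pow_sub_le_two_pow_mul_signedPow_sub_of_nonpos_of_nonneg h₂ h₁
  · have hodd := pow_sub_le_two_pow_mul_signedPow_sub_of_nonneg (d := d)
      (neg_nonneg.2 h₁) (neg_le_neg h)
    rwa [signedPow_neg, signedPow_neg, neg_sub_neg, neg_sub_neg] at hodd

end

theorem stmt_8_general (d : ℕ) :
    ∃ c : ℝ, 0 < c ∧ ∀ z₁ z₂ : ℝ,
      c * |z₁ - z₂| ^ (d + 2) ≤ (z₁ - z₂) * (z₁ * |z₁| ^ d - z₂ * |z₂| ^ d) := by
  refine ⟨(2 ^ d)⁻¹, by positivity, fun z₁ z₂ => ?_⟩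
  wlog h : z₂ ≤ z₁ generalizing z₁ z₂
  · rw [abs_sub_comm]
    convert this z₂ z₁ (le_of_not_ge h) using 1
    ring
  have hsub : 0 ≤ z₁ - z₂ := sub_nonneg.2 h
  have hgap := pow_sub_le_two_pow_mul_signedPow_sub (d := d) h
  rw [← inv_mul_le_iff₀ (by positivity)] at hgap
  calc (2 ^ d)⁻¹ * |z₁ - z₂| ^ (d + 2) = (z₁ - z₂) * ((2 ^ d)⁻¹ * (z₁ - z₂) ^ (d + 1)) := by
        rw [abs_of_nonneg hsub]; ring
    _ ≤ (z₁ - z₂) * (signedPow d z₁ - signedPow d z₂) := mul_le_mul_of_nonneg_left hgap hsub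

theorem stmt_8 (d : ℕ) (hd : 1 ≤ d) :
    ∃ c : ℝ, 0 < c ∧ ∀ z₁ z₂ : ℝ,
      c * |z₁ - z₂| ^ (d + 2) ≤ (z₁ - z₂) * (z₁ * |z₁| ^ d - z₂ * |z₂| ^ d) :=
  stmt_8_general d
end

section
/- Let f : ℝ^m → ℝ^m be continuous (e.g., locally Lipschitz) and Γ ⊂ ℝ^m compact and nonempty. Suppose that for every y ≠ 0, inf_{z ∈ Γ} ⟨y, f(y+z) − f(z)⟩/‖y‖ > 0, and that this infimum tends to 0 as ‖y‖ → 0. Then there exists a continuous function α : [0,∞) → [0,∞) with α(0) = 0 and α(s) > 0 for s > 0, such that ⟨y, f(y+z) − f(z)⟩ ≥ ‖y‖·α(‖y‖) for all y ∈ ℝ^m and all z ∈ Γ. -/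
/-!
Put `G y := inf_{z ∈ Γ} ⟨y, f (y + z) - f z⟫`, which is continuous because `Γ` is compact and
positive off `0` by hypothesis. The minimum `β s` of `G` over the sphere of radius `s` is continuous
and positive for `s > 0`, and `α s := β s / s` works: `‖y‖ α ‖y‖ = β ‖y‖ ≤ G y`, and near `0`
we have `0 ≤ α s ≤ G (s u₀) / s` for a fixed unit vector `u₀`, which tends to `0` by hypothesis.
-/

open Filter Topology Metric Set
open scoped RealInnerProductSpace

theorem sInf_image_div_of_nonneg {ι : Type*} (s : Set ι) (h : ι → ℝ) {c : ℝ} (hc : 0 ≤ c) :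
    sInf ((fun i => h i / c) '' s) = sInf (h '' s) / c := by
  have : (fun i => h i / c) = (c⁻¹ • ·) ∘ h := by
    funext i
    simp [div_eq_inv_mul]
  rw [this, image_comp, image_smul, Real.sInf_smul_of_nonneg (inv_nonneg.2 hc), smul_eq_mul,
    inv_mul_eq_div]

section RadialInf

variable {E : Type*} [NormedAddCommGroup E] [NormedSpace ℝ E]

noncomputable def radialInf (G : E → ℝ) (s : ℝ) : ℝ :=
  sInf ((fun u => G (s • u)) '' sphere (0 : E) 1)

variable [ProperSpace E] {G : E → ℝ}

theorem continuous_radialInf (hG : Continuous G) : Continuous (radialInf G) :=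
  (isCompact_sphere (0 : E) 1).continuous_sInf (hG.comp (continuous_fst.smul continuous_snd))

theorem radialInf_le (hG : Continuous G) (s : ℝ) {u : E} (hu : u ∈ sphere 0 1) :
    radialInf G s ≤ G (s • u) :=
  csInf_le ((isCompact_sphere 0 1).image (hG.comp (continuous_const_smul s))).bddBelow
    ⟨u, hu, rfl⟩

theorem radialInf_norm_le (hG : Continuous G) {y : E} (hy : y ≠ 0) : radialInf G ‖y‖ ≤ G y := by
  have h := radialInf_le hG ‖y‖ (u := ‖y‖⁻¹ • y) (by simp [norm_smul, hy])
  rwa [smul_smul, mul_inv_cancel₀ (norm_ne_zero_iff.2 hy), one_smul] at h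

variable [Nontrivial E]

theorem radialInf_pos (hG : Continuous G) (hpos : ∀ y ≠ 0, 0 < G y) {s : ℝ} (hs : 0 < s) :
    0 < radialInf G s := by
  have hK : IsCompact ((fun u => G (s • u)) '' sphere (0 : E) 1) :=
    (isCompact_sphere 0 1).image (hG.comp (continuous_const_smul s))
  obtain ⟨u, hu, hmin⟩ := hK.sInf_mem ((NormedSpace.sphere_nonempty.2 zero_le_one).image _)
  rw [radialInf, ← hmin]
  exact hpos _ (smul_ne_zero hs.ne' (ne_zero_of_mem_sphere one_ne_zero ⟨u, hu⟩))

theorem radialInf_div_nonneg (hG : Continuous G) (hpos : ∀ y ≠ 0, 0 < G y) {s : ℝ}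
    (hs : 0 ≤ s) : 0 ≤ radialInf G s / s := by
  rcases hs.eq_or_lt with rfl | hs
  · simp
  · exact (div_pos (radialInf_pos hG hpos hs) hs).le

/-- At `s = 0` the function `radialInf G s / s` takes the junk value `0`, which is the value needed. -/
theorem continuousOn_radialInf_div (hG : Continuous G) (hpos : ∀ y ≠ 0, 0 < G y)
    (hlim : Tendsto (fun y => G y / ‖y‖) (𝓝[≠] 0) (𝓝 0)) :
    ContinuousOn (fun s => radialInf G s / s) (Ici 0) := by
  intro s hs
  rcases (mem_Ici.1 hs).eq_or_lt with rfl | hs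
  · obtain ⟨u, hu⟩ := (NormedSpace.sphere_nonempty (x := (0 : E))).2 zero_le_one
    have hg : ContinuousAt (fun y => G y / ‖y‖) 0 := by
      rw [← continuousWithinAt_compl_self, ContinuousWithinAt]
      simpa using hlim
    have hray : Tendsto (fun t : ℝ => G (t • u) / ‖t • u‖) (𝓝 0) (𝓝 0) := by
      have hline : Tendsto (fun t : ℝ => t • u) (𝓝 0) (𝓝 0) :=
        (continuous_id.smul continuous_const).tendsto' 0 0 (zero_smul _ u)
      simpa [Function.comp_def] using hg.tendsto.comp hline
    rw [ContinuousWithinAt, div_zero]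
    refine squeeze_zero' ?_ ?_ (hray.mono_left nhdsWithin_le_nhds)
    · filter_upwards [self_mem_nhdsWithin] with t ht
      exact radialInf_div_nonneg hG hpos ht
    · filter_upwards [self_mem_nhdsWithin] with t (ht : 0 ≤ t)
      rw [norm_smul, mem_sphere_zero_iff_norm.1 hu, mul_one, Real.norm_of_nonneg ht]
      exact div_le_div_of_nonneg_right (radialInf_le hG t hu) ht
  · exact ((continuous_radialInf hG).continuousAt.div continuousAt_id hs.ne').continuousWithinAt

end RadialInf

theorem stmt_12_general (m : ℕ)
    (f : EuclideanSpace ℝ (Fin m) → EuclideanSpace ℝ (Fin m)) (hf : Continuous f)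
    (Γ : Set (EuclideanSpace ℝ (Fin m))) (hΓc : IsCompact Γ)
    (hpos : ∀ y : EuclideanSpace ℝ (Fin m), y ≠ 0 →
      0 < sInf ((fun z => ⟪y, f (y + z) - f z⟫ / ‖y‖) '' Γ))
    (hlim : Filter.Tendsto
      (fun y : EuclideanSpace ℝ (Fin m) => sInf ((fun z => ⟪y, f (y + z) - f z⟫ / ‖y‖) '' Γ))
      (nhdsWithin 0 {y | y ≠ 0}) (nhds 0)) :
    ∃ α : ℝ → ℝ, ContinuousOn α (Set.Ici 0) ∧ α 0 = 0 ∧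
      (∀ s : ℝ, 0 < s → 0 < α s) ∧ (∀ s ∈ Set.Ici (0:ℝ), 0 ≤ α s) ∧
      ∀ (y : EuclideanSpace ℝ (Fin m)), ∀ z ∈ Γ,
        ‖y‖ * α ‖y‖ ≤ ⟪y, f (y + z) - f z⟫ := by
  rcases subsingleton_or_nontrivial (EuclideanSpace ℝ (Fin m)) with hE | hE
  · refine ⟨id, continuousOn_id, rfl, fun s hs => hs, fun s hs => hs, fun y z _ => ?_⟩
    simp [Subsingleton.elim y 0]
  have hF : Continuous fun p : EuclideanSpace ℝ (Fin m) × EuclideanSpace ℝ (Fin m) =>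
      ⟪p.1, f (p.1 + p.2) - f p.2⟫ :=
    continuous_fst.inner ((hf.comp (continuous_fst.add continuous_snd)).sub (hf.comp continuous_snd))
  set G := fun y => sInf ((fun z => ⟪y, f (y + z) - f z⟫) '' Γ)
  have hG : Continuous G := hΓc.continuous_sInf hF
  simp only [fun y => sInf_image_div_of_nonneg Γ (fun z => ⟪y, f (y + z) - f z⟫) (norm_nonneg y)]
    at hpos hlim
  have hGpos : ∀ y ≠ 0, 0 < G y := fun y hy =>
    (div_pos_iff_of_pos_right (norm_pos_iff.2 hy)).1 (hpos y hy)
  refine ⟨fun s => radialInf G s / s, continuousOn_radialInf_div hG hGpos hlim, div_zero _,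
    fun s hs => div_pos (radialInf_pos hG hGpos hs) hs,
    fun s hs => radialInf_div_nonneg hG hGpos hs, fun y z hz => ?_⟩
  rcases eq_or_ne y 0 with rfl | hy
  · simp
  calc ‖y‖ * (radialInf G ‖y‖ / ‖y‖) = radialInf G ‖y‖ :=
        mul_div_cancel₀ _ (norm_ne_zero_iff.2 hy)
    _ ≤ G y := radialInf_norm_le hG hy
    _ ≤ ⟪y, f (y + z) - f z⟫ :=
        csInf_le (hΓc.image (hF.comp (Continuous.prodMk_right y))).bddBelow ⟨z, hz, rfl⟩

theorem stmt_12 (m : ℕ)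
    (f : EuclideanSpace ℝ (Fin m) → EuclideanSpace ℝ (Fin m)) (hf : Continuous f)
    (Γ : Set (EuclideanSpace ℝ (Fin m))) (hΓc : IsCompact Γ) (hΓne : Γ.Nonempty)
    (hpos : ∀ y : EuclideanSpace ℝ (Fin m), y ≠ 0 →
      0 < sInf ((fun z => ⟪y, f (y + z) - f z⟫ / ‖y‖) '' Γ))
    (hlim : Filter.Tendsto
      (fun y : EuclideanSpace ℝ (Fin m) => sInf ((fun z => ⟪y, f (y + z) - f z⟫ / ‖y‖) '' Γ))
      (nhdsWithin 0 {y | y ≠ 0}) (nhds 0)) :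
    ∃ α : ℝ → ℝ, ContinuousOn α (Set.Ici 0) ∧ α 0 = 0 ∧
      (∀ s : ℝ, 0 < s → 0 < α s) ∧ (∀ s ∈ Set.Ici (0:ℝ), 0 ≤ α s) ∧
      ∀ (y : EuclideanSpace ℝ (Fin m)), ∀ z ∈ Γ,
        ‖y‖ * α ‖y‖ ≤ ⟪y, f (y + z) - f z⟫ :=
  stmt_12_general m f hf Γ hΓc hpos hlim
end

section
/- Let A ∈ ℝ^{n×n}, B ∈ ℝ^{n×m}, C ∈ ℝ^{m×n}, let P ∈ ℝ^{n×n} be symmetric positive definite and ε > 0 such that the block matrix [[AᵀP + PA + εI, PB − Cᵀ],[BᵀP − C, 0]] is negative semi-definite. Then there exist ε₀, ε₁ > 0 such that for all z ∈ ℝ^n and u, w ∈ ℝ^m with ⟨w, Cz⟩ ≥ 0: 2⟨Pz, Az − B(w − u)⟩ ≤ −ε₀‖z‖² + ε₁‖u‖². -/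
open Matrix

section

variable {ι κ : Type*} [Fintype ι] [Fintype κ]

theorem two_mul_dotProduct_le_mul_self_add_inv_mul_self {δ : ℝ} (hδ : 0 < δ) (u y : κ → ℝ) :
    2 * (u ⬝ᵥ y) ≤ δ * (y ⬝ᵥ y) + δ⁻¹ * (u ⬝ᵥ u) := by
  have hsq : 0 ≤ (δ • y - u) ⬝ᵥ (δ • y - u) := by
    simpa using dotProduct_star_self_nonneg (δ • y - u)
  simp only [dotProduct_sub, sub_dotProduct, dotProduct_smul, smul_dotProduct, smul_eq_mul,
    dotProduct_comm y u] at hsq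
  refine le_of_mul_le_mul_left ?_ hδ
  rw [mul_add, ← mul_assoc δ δ⁻¹, mul_inv_cancel₀ hδ.ne']
  linarith

theorem mulVec_dotProduct_mulVec_self_le (C : Matrix κ ι ℝ) (z : ι → ℝ) :
    C *ᵥ z ⬝ᵥ C *ᵥ z ≤ (∑ i, ∑ j, C i j ^ 2) * (z ⬝ᵥ z) := by
  simp only [dotProduct, mulVec, Finset.sum_mul, ← sq]
  gcongr with i
  simpa only [Finset.sum_mul] using Finset.sum_mul_sq_le_sq_mul_sq Finset.univ (C i) z

theorem two_mul_dotProduct_mulVec_add_le_of_negSemidef [DecidableEq ι] {ε : ℝ}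
    {A P : Matrix ι ι ℝ} {B : Matrix ι κ ℝ} {C : Matrix κ ι ℝ} (hP : Pᵀ = P)
    (hLMI : (-(fromBlocks (Aᵀ * P + P * A + ε • (1 : Matrix ι ι ℝ))
      (P * B - Cᵀ) (Bᵀ * P - C) (0 : Matrix κ κ ℝ))).PosSemidef)
    (z : ι → ℝ) (v : κ → ℝ) :
    2 * (P *ᵥ z ⬝ᵥ (A *ᵥ z + B *ᵥ v)) + ε * (z ⬝ᵥ z) ≤ 2 * (v ⬝ᵥ C *ᵥ z) := by
  have hquad := hLMI.dotProduct_mulVec_nonneg (Sum.elim z v)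
  have hP' (x : ι → ℝ) : z ⬝ᵥ P *ᵥ x = P *ᵥ z ⬝ᵥ x := by
    rw [dotProduct_mulVec, ← vecMul_transpose, hP]
  simp only [star_trivial, neg_mulVec, dotProduct_neg, fromBlocks_mulVec, Sum.elim_comp_inl,
    Sum.elim_comp_inr, sumElim_dotProduct_sumElim, add_mulVec, sub_mulVec, smul_mulVec,
    one_mulVec, zero_mulVec, add_zero, dotProduct_add, dotProduct_sub, dotProduct_smul,
    smul_eq_mul, ← mulVec_mulVec, hP', dotProduct_mulVec _ Aᵀ, dotProduct_mulVec _ Bᵀ,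
    dotProduct_mulVec _ Cᵀ, vecMul_transpose] at hquad
  rw [dotProduct_add]
  linarith [dotProduct_comm (A *ᵥ z) (P *ᵥ z), dotProduct_comm (B *ᵥ v) (P *ᵥ z),
    dotProduct_comm (C *ᵥ z) v]

end

theorem stmt_17_general (n m : ℕ) (ε : ℝ) (hε : 0 < ε)
    (A : Matrix (Fin n) (Fin n) ℝ) (B : Matrix (Fin n) (Fin m) ℝ)
    (C : Matrix (Fin m) (Fin n) ℝ) (P : Matrix (Fin n) (Fin n) ℝ)
    (hPsymm : Pᵀ = P)
    (hLMI : (-(Matrix.fromBlocks (Aᵀ * P + P * A + ε • (1 : Matrix (Fin n) (Fin n) ℝ))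
      (P * B - Cᵀ) (Bᵀ * P - C) (0 : Matrix (Fin m) (Fin m) ℝ))).PosSemidef) :
    ∃ ε₀ : ℝ, 0 < ε₀ ∧ ∃ ε₁ : ℝ, 0 < ε₁ ∧
      ∀ (z : Fin n → ℝ) (u w : Fin m → ℝ), 0 ≤ w ⬝ᵥ C.mulVec z →
        2 * (P.mulVec z ⬝ᵥ (A.mulVec z - B.mulVec (w - u))) ≤
          -ε₀ * (z ⬝ᵥ z) + ε₁ * (u ⬝ᵥ u) := by
  set K := ∑ i, ∑ j, C i j ^ 2
  have hK : 0 ≤ K := by positivity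
  -- Young's inequality with weight δ absorbs `2⟨u, Cz⟩` into half of the `-ε‖z‖²` margin.
  set δ := ε / (2 * (K + 1))
  have hδ : 0 < δ := by positivity
  have hδK : δ * K ≤ ε / 2 := by
    rw [div_mul_eq_mul_div, div_le_div_iff₀ (by positivity) two_pos]
    nlinarith
  refine ⟨ε / 2, half_pos hε, δ⁻¹, inv_pos.2 hδ, fun z u w hw => ?_⟩
  have hlmi := two_mul_dotProduct_mulVec_add_le_of_negSemidef hPsymm hLMI z (u - w)
  have hyoung := two_mul_dotProduct_le_mul_self_add_inv_mul_self hδ u (C *ᵥ z)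
  have hCz : δ * (C *ᵥ z ⬝ᵥ C *ᵥ z) ≤ ε / 2 * (z ⬝ᵥ z) :=
    calc δ * (C *ᵥ z ⬝ᵥ C *ᵥ z) ≤ δ * (K * (z ⬝ᵥ z)) :=
          mul_le_mul_of_nonneg_left (mulVec_dotProduct_mulVec_self_le C z) hδ.le
      _ ≤ ε / 2 * (z ⬝ᵥ z) := by
          rw [← mul_assoc]
          exact mul_le_mul_of_nonneg_right hδK (by simpa using dotProduct_star_self_nonneg z)
  rw [← neg_sub u w, mulVec_neg, sub_neg_eq_add]
  rw [sub_dotProduct] at hlmi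
  linarith

theorem stmt_17 (n m : ℕ) (ε : ℝ) (hε : 0 < ε)
    (A : Matrix (Fin n) (Fin n) ℝ) (B : Matrix (Fin n) (Fin m) ℝ)
    (C : Matrix (Fin m) (Fin n) ℝ) (P : Matrix (Fin n) (Fin n) ℝ)
    (hPsymm : Pᵀ = P) (hPpd : P.PosDef)
    (hLMI : (-(Matrix.fromBlocks (Aᵀ * P + P * A + ε • (1 : Matrix (Fin n) (Fin n) ℝ))
      (P * B - Cᵀ) (Bᵀ * P - C) (0 : Matrix (Fin m) (Fin m) ℝ))).PosSemidef) :
    ∃ ε₀ : ℝ, 0 < ε₀ ∧ ∃ ε₁ : ℝ, 0 < ε₁ ∧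
      ∀ (z : Fin n → ℝ) (u w : Fin m → ℝ), 0 ≤ w ⬝ᵥ C.mulVec z →
        2 * (P.mulVec z ⬝ᵥ (A.mulVec z - B.mulVec (w - u))) ≤
          -ε₀ * (z ⬝ᵥ z) + ε₁ * (u ⬝ᵥ u) :=
  stmt_17_general n m ε hε A B C P hPsymm hLMI
end
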